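/- Let n ≥ 1, let λ be a partition with l(λ) = n, and let μ ⊆ λ be a partition with l(μ) = n−1. Then the following identity holds in ℤ[t]: Σ_β φ_{λ/β}(t²) · t^{2(|β|−|μ|)} · sk_{β/μ}(t²) = (1 − t²) · sk_{λ/μ}(t²), where the sum is over all partitions β with μ ⊆ β, β ≼ λ (i.e. λ/β is a horizontal strip), and l(β) ≤ n−1. -/

import Mathlib

open scoped BigOperators Classical

namespace EK

/-- Conjugate partition: `conj f j = #{i : f i ≥ j}` (parts of `f` are `f 0, f 1, …`,
i.e. `f i = λ_{i+1}`). -/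
noncomputable def conj (f : ℕ → ℕ) (j : ℕ) : ℕ := Nat.card {i : ℕ // j ≤ f i}

/-- `f` represents a partition: weakly decreasing with finitely many nonzero parts. -/
def IsPartition (f : ℕ → ℕ) : Prop := Antitone f ∧ ∃ N, ∀ i, N ≤ i → f i = 0

/-- `l(f) = n`: the first `n` parts are positive, the rest vanish. -/
def HasLength (f : ℕ → ℕ) (n : ℕ) : Prop := (∀ i < n, 0 < f i) ∧ ∀ i, n ≤ i → f i = 0

/-- `|λ| = Σ_i λ_i`. -/
noncomputable def psize (f : ℕ → ℕ) : ℕ := ∑ᶠ i, f i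

/-- `n(λ) = Σ_{i ≥ 1} (i-1) λ_i` (0-indexed: `Σ_i i * f i`). -/
noncomputable def nstat (f : ℕ → ℕ) : ℕ := ∑ᶠ i, i * f i

/-- `φ_r(u) = ∏_{i=1}^r (1 - u^i)`. -/
def phiPoch {F : Type*} [Field F] (u : F) (r : ℕ) : F := ∏ i ∈ Finset.Icc 1 r, (1 - u ^ i)

/-- Gaussian binomial `binom(a,b)_u = φ_a(u)/(φ_b(u) φ_{a-b}(u))` for `0 ≤ b ≤ a`, `0` otherwise. -/
noncomputable def gauss {F : Type*} [Field F] (u : F) (a b : ℤ) : F :=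
  if 0 ≤ b ∧ b ≤ a then phiPoch u a.toNat / (phiPoch u b.toNat * phiPoch u (a - b).toNat)
  else 0

/-- `sk_{λ/μ}(u) = u^{Σ_{j≥1} C(λ'_j - μ'_j, 2)} ∏_{j≥1} binom(λ'_j - μ'_{j+1}, m_j(μ))_u`
(the factors for `j > λ_1` are all `1` and the exponents vanish there, so the product and
sum are taken over `1 ≤ j ≤ λ_1 = f 0`). -/
noncomputable def sk {F : Type*} [Field F] (u : F) (f g : ℕ → ℕ) : F :=
  u ^ (∑ j ∈ Finset.Icc 1 (f 0), Nat.choose (conj f j - conj g j) 2) *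
    ∏ j ∈ Finset.Icc 1 (f 0),
      gauss u ((conj f j : ℤ) - (conj g (j + 1) : ℤ)) ((conj g j : ℤ) - (conj g (j + 1) : ℤ))

/-- `μ ⊆ λ` and `λ/μ` is a horizontal strip, i.e. `λ'_j - μ'_j ∈ {0,1}` for all `j ≥ 1`. -/
def IsHStrip (f g : ℕ → ℕ) : Prop :=
  (∀ i, g i ≤ f i) ∧ ∀ j, 1 ≤ j → conj f j ≤ conj g j + 1

/-- `φ_{λ/μ}(u) = ∏_{j ≥ 1, λ'_j = μ'_j + 1, λ'_{j+1} = μ'_{j+1}} (1 - u^{m_j(λ)})` if `λ/μ` is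
a horizontal strip, and `0` otherwise (factors with `j > λ_1` never occur). -/
noncomputable def phiStrip {F : Type*} [Field F] (u : F) (f g : ℕ → ℕ) : F :=
  if IsHStrip f g then
    ∏ j ∈ (Finset.Icc 1 (f 0)).filter
        (fun j => conj f j = conj g j + 1 ∧ conj f (j + 1) = conj g (j + 1)),
      (1 - u ^ (conj f j - conj f (j + 1)))
  else 0

/-- `b_λ(u) = ∏_{i ≥ 1} φ_{m_i(λ)}(u)` (factors with `i > λ_1` are `1`). -/
noncomputable def bcoef {F : Type*} [Field F] (u : F) (f : ℕ → ℕ) : F :=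
  ∏ i ∈ Finset.Icc 1 (f 0), phiPoch u (conj f i - conj f (i + 1))

end EK

/-!
Write `u = t²` and pass to conjugate partitions, `L = λ'` and `M = μ'`. A partition `β` in the
sum is determined by the set `D` of columns `j` with `β'_j = L_j - 1`, and `1 ∈ D` because
`l(β) < l(λ)`. The summand factors over the columns, the factor of column `j` depending only on
whether `j` and `j + 1` lie in `D`; sets `D` that do not come from a partition `β ⊇ μ` get
weight `0`. The sum over `D` is thus a transfer-matrix product, evaluated from the last column
leftwards: the partial sum starting at column `j` with `j ∈ D` (resp. `j ∉ D`) is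
`1 - u^{L_j - M_j}` (resp. `u^{L_j - M_j}`) times `∏_{i ≥ j} binom(L_i - M_{i+1}, m_i(μ))_u`, and
each step reduces to `(1 - u^a) binom(a - 1, b)_u = (1 - u^{a-b}) binom(a, b)_u`. At `j = 1`
this is `(1 - u) sk_{λ/μ}(u)`, as `L_1 - M_1 = 1`.
-/

lemma RatFunc.X_pow_ne_one {K : Type*} [Field K] {m : ℕ} (hm : 0 < m) :
    (RatFunc.X : RatFunc K) ^ m ≠ 1 := by
  rw [← RatFunc.algebraMap_X, ← map_pow, ← map_one (algebraMap (Polynomial K) (RatFunc K)),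
    ne_eq, (RatFunc.algebraMap_injective K).eq_iff]
  intro h
  simpa [hm.ne'] using congrArg Polynomial.natDegree h

namespace EK

open Finset

namespace IsPartition

variable {f g : ℕ → ℕ}

lemma setOf_le_eq_Iio (hf : IsPartition f) {j : ℕ} (hj : 1 ≤ j) :
    ∃ k, {i | j ≤ f i} = Set.Iio k := by
  obtain ⟨hanti, N, hN⟩ := hf
  have hex : ∃ i, f i < j := ⟨N, by rw [hN N le_rfl]; omega⟩
  refine ⟨Nat.find hex, Set.ext fun i =>
    ⟨fun hi => ?_, fun hi => not_lt.mp (Nat.find_min hex hi)⟩⟩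
  by_contra hc
  have := hanti (not_lt.mp hc)
  have := Nat.find_spec hex
  simp only [Set.mem_ofPred_eq] at hi
  omega

lemma lt_conj_iff (hf : IsPartition f) {j : ℕ} (hj : 1 ≤ j) (i : ℕ) :
    i < conj f j ↔ j ≤ f i := by
  obtain ⟨k, hk⟩ := hf.setOf_le_eq_Iio hj
  have hconj : conj f j = k := by
    rw [conj, ← Set.coe_ofPred, hk]
    simp
  rw [hconj, ← Set.mem_Iio, ← hk, Set.mem_ofPred_eq]

lemma conj_eq_zero (hf : IsPartition f) {j : ℕ} (hj : f 0 < j) : conj f j = 0 := by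
  by_contra hc
  have := (hf.lt_conj_iff (j := j) (by omega) 0).mp (by omega)
  omega

lemma conj_antitone (hf : IsPartition f) {j j' : ℕ} (hj : 1 ≤ j) (hjj' : j ≤ j') :
    conj f j' ≤ conj f j := by
  by_contra hc
  have := (hf.lt_conj_iff (j := j') (by omega) (conj f j)).mp (by omega)
  have := (hf.lt_conj_iff hj (conj f j)).mpr (by omega)
  omega

lemma le_iff_conj_le (hf : IsPartition f) (hg : IsPartition g) :
    (∀ i, g i ≤ f i) ↔ ∀ j, 1 ≤ j → conj g j ≤ conj f j := by
  constructor
  · intro hle j hj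
    by_contra hc
    have := (hg.lt_conj_iff hj _).mp (not_le.mp hc)
    have := (hf.lt_conj_iff hj (conj f j)).mpr (this.trans (hle _))
    omega
  · intro hle i
    rcases Nat.eq_zero_or_pos (g i) with h0 | hpos
    · omega
    · exact (hf.lt_conj_iff hpos i).mp
        (((hg.lt_conj_iff hpos i).mpr le_rfl).trans_le (hle _ hpos))

lemma psize_eq_sum_conj (hf : IsPartition f) {K : ℕ} (hK : f 0 ≤ K) :
    psize f = ∑ j ∈ Icc 1 K, conj f j := by
  set N := conj f 1
  have hsupp : Function.support f ⊆ ↑(range N) := fun i hi => by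
    simpa [N, hf.lt_conj_iff le_rfl i, Nat.one_le_iff_ne_zero] using hi
  have hrow (i : ℕ) : f i = ∑ j ∈ Icc 1 K, if i < conj f j then 1 else 0 := by
    rw [sum_boole, Nat.cast_id, filter_congr fun j hj => hf.lt_conj_iff (mem_Icc.mp hj).1 i,
      show (Icc 1 K).filter (· ≤ f i) = Icc 1 (f i) by
        ext j; simp only [mem_filter, mem_Icc]; have := hf.1 (Nat.zero_le i); omega,
      Nat.card_Icc, Nat.add_sub_cancel]
  have hcol (j : ℕ) (hj : j ∈ Icc 1 K) :
      ∑ i ∈ range N, (if i < conj f j then 1 else 0) = conj f j := by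
    have hjN : conj f j ≤ N := hf.conj_antitone le_rfl (mem_Icc.mp hj).1
    rw [sum_boole, Nat.cast_id, show (range N).filter (· < conj f j) = range (conj f j) by
      ext i; simp only [mem_filter, mem_range]; omega, card_range]
  rw [psize, finsum_eq_sum_of_support_subset f hsupp, sum_congr rfl fun i _ => hrow i, sum_comm]
  exact sum_congr rfl hcol

lemma conj_succ (hf : IsPartition f) : IsPartition fun i => conj f (i + 1) :=
  ⟨fun _ _ h => hf.conj_antitone (by omega) (by omega),
    ⟨f 0, fun _ hi => hf.conj_eq_zero (by omega)⟩⟩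

lemma conj_conj_succ (hf : IsPartition f) (j : ℕ) :
    conj (fun i => conj f (i + 1)) (j + 1) = f j := by
  refine eq_of_forall_lt_iff fun i => ?_
  rw [hf.conj_succ.lt_conj_iff (by omega), Nat.succ_le_iff, hf.lt_conj_iff (by omega)]
  omega

end IsPartition

lemma HasLength.conj_one {f : ℕ → ℕ} {n : ℕ} (hf : HasLength f n) : conj f 1 = n := by
  have hset : {i | 1 ≤ f i} = Set.Iio n := Set.ext fun i => by
    have := hf.1 i
    have := hf.2 i
    simp only [Set.mem_ofPred_eq, Set.mem_Iio]
    omega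
  rw [conj, ← Set.coe_ofPred, hset]
  simp

section Gauss

variable {F : Type*} [Field F] {u : F}

lemma one_sub_pow_ne_zero (hu : ∀ m, 0 < m → u ^ m ≠ 1) {m : ℕ} (hm : 0 < m) :
    1 - u ^ m ≠ 0 :=
  sub_ne_zero.mpr (hu m hm).symm

lemma phiPoch_ne_zero (hu : ∀ m, 0 < m → u ^ m ≠ 1) (r : ℕ) : phiPoch u r ≠ 0 :=
  prod_ne_zero_iff.mpr fun _ hi => one_sub_pow_ne_zero hu (mem_Icc.mp hi).1

variable (u)

lemma phiPoch_succ (r : ℕ) : phiPoch u (r + 1) = phiPoch u r * (1 - u ^ (r + 1)) :=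
  prod_Icc_succ_top (by omega) _

lemma gauss_natCast {a b : ℕ} (h : b ≤ a) :
    gauss u a b = phiPoch u a / (phiPoch u b * phiPoch u (a - b)) := by
  rw [gauss, if_pos ⟨by omega, by omega⟩]
  congr 3
  omega

lemma gauss_of_lt {a b : ℤ} (h : a < b) : gauss u a b = 0 :=
  if_neg (by omega)

lemma gauss_zero_zero : gauss u 0 0 = 1 := by
  simpa [phiPoch] using gauss_natCast u (le_refl 0)

variable {u}

lemma one_sub_pow_mul_gauss_sub_one (hu : ∀ m, 0 < m → u ^ m ≠ 1) (a b : ℕ) :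
    (1 - u ^ a) * gauss u ((a : ℤ) - 1) b = (1 - u ^ (a - b)) * gauss u a b := by
  rcases lt_trichotomy b a with hba | rfl | hab
  · obtain ⟨c, rfl⟩ := Nat.exists_eq_add_of_lt hba
    have hcast : ((b + c + 1 : ℕ) : ℤ) - 1 = ((b + c : ℕ) : ℤ) := by push_cast; ring
    rw [hcast, gauss_natCast u (by omega), gauss_natCast u (by omega),
      show b + c + 1 - b = c + 1 by omega, show b + c - b = c by omega, phiPoch_succ,
      phiPoch_succ]
    have := phiPoch_ne_zero hu b
    have := phiPoch_ne_zero hu c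
    have := one_sub_pow_ne_zero hu (m := b + c + 1) (by omega)
    have := one_sub_pow_ne_zero hu (m := c + 1) (by omega)
    field_simp
  · rw [gauss_of_lt u (by omega), Nat.sub_self, pow_zero, sub_self, mul_zero, zero_mul]
  · rw [gauss_of_lt u (by omega), gauss_of_lt u (by omega), mul_zero, mul_zero]

end Gauss

section Chain

variable {R : Type*} [CommSemiring R] (w : ℕ → Bool → Bool → R)

def chainWeight (a b : ℕ) (D : Finset ℕ) : R := ∏ i ∈ Icc a b, w i (i ∈ D) (i + 1 ∈ D)

/-- The sum of `chainWeight w j K D` over `D ⊆ [j, K]` with `j ∈ D ↔ e`. -/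
def chainSum (j K : ℕ) (e : Bool) : R :=
  ∑ S ∈ (Icc (j + 1) K).powerset, chainWeight w j K (if e then insert j S else S)

lemma chainSum_self (K : ℕ) (e : Bool) : chainSum w K K e = w K e false := by
  cases e <;> simp [chainSum, chainWeight]

lemma chainWeight_succ {j K : ℕ} (hj : j ≤ K) (D : Finset ℕ) :
    chainWeight w j K D = w j (j ∈ D) (j + 1 ∈ D) * chainWeight w (j + 1) K D := by
  rw [chainWeight, ← insert_Icc_add_one_left_eq_Icc hj, prod_insert (by simp), chainWeight]

lemma chainWeight_insert_of_lt {a b j : ℕ} (hj : j < a) (D : Finset ℕ) :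
    chainWeight w a b (insert j D) = chainWeight w a b D :=
  prod_congr rfl fun i hi => by
    have := (mem_Icc.mp hi).1
    simp [show i ≠ j by omega, show i + 1 ≠ j by omega]

lemma chainSum_succ {j K : ℕ} (hj : j < K) (e : Bool) :
    chainSum w j K e =
      w j e false * chainSum w (j + 1) K false + w j e true * chainSum w (j + 1) K true := by
  have hsplit (S : Finset ℕ) (hS : S ⊆ Icc (j + 1) K) :
      chainWeight w j K (if e then insert j S else S) =
        w j e (j + 1 ∈ S) * chainWeight w (j + 1) K S := by
    have hjS : j ∉ S := fun h => by simpa using hS h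
    rw [chainWeight_succ w hj.le]
    cases e
    · simp [hjS]
    · simp [chainWeight_insert_of_lt w (Nat.lt_succ_self j)]
  rw [chainSum, sum_congr rfl fun S hS => hsplit S (mem_powerset.mp hS),
    ← insert_Icc_add_one_left_eq_Icc (show j + 1 ≤ K by omega),
    sum_powerset_insert (by simp), chainSum, chainSum, mul_sum, mul_sum]
  congr 1 <;> refine sum_congr rfl fun S hS => ?_
  · have : j + 1 ∉ S := fun h => by simpa using mem_powerset.mp hS h
    simp [this]
  · simp

end Chain

section Column

variable {F : Type*} [Field F] (u : F) (L M : ℕ → ℕ)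

/-- With `L = λ'` and `M = μ'`: column `j` keeps its bottom box (`false`) or loses it (`true`);
the second flag says whether column `j + 1` loses its box. -/
noncomputable def colWeight (j : ℕ) : Bool → Bool → F
  | false, _ => u ^ (L j - M j) * gauss u ((L j : ℤ) - M (j + 1)) ((M j : ℤ) - M (j + 1))
  | true, b => gauss u ((L j : ℤ) - 1 - M (j + 1)) ((M j : ℤ) - M (j + 1)) *
      if b then 1 else 1 - u ^ (L j - L (j + 1))

variable {u L M}

lemma colWeight_step (hu : ∀ m, 0 < m → u ^ m ≠ 1) {j : ℕ} (hML : M j ≤ L j)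
    (hML' : M (j + 1) ≤ L (j + 1)) (hL : L (j + 1) ≤ L j) (hM : M (j + 1) ≤ M j) (e : Bool)
    (P : F) :
    colWeight u L M j e false * (u ^ (L (j + 1) - M (j + 1)) * P) +
        colWeight u L M j e true * ((1 - u ^ (L (j + 1) - M (j + 1))) * P) =
      (if e then 1 - u ^ (L j - M j) else u ^ (L j - M j)) *
        (gauss u ((L j : ℤ) - M (j + 1)) ((M j : ℤ) - M (j + 1)) * P) := by
  cases e
  · simp only [colWeight, Bool.false_eq_true, if_false]
    ring
  · have hrec := one_sub_pow_mul_gauss_sub_one hu (L j - M (j + 1)) (M j - M (j + 1))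
    rw [show L j - M (j + 1) - (M j - M (j + 1)) = L j - M j by omega] at hrec
    push_cast [hM, hM.trans hML] at hrec
    rw [sub_right_comm] at hrec
    have hpow : u ^ (L j - L (j + 1)) * u ^ (L (j + 1) - M (j + 1)) = u ^ (L j - M (j + 1)) := by
      rw [← pow_add]
      congr 1
      omega
    simp only [colWeight, if_true, Bool.false_eq_true, if_false]
    linear_combination P * hrec -
      gauss u ((L j : ℤ) - 1 - M (j + 1)) ((M j : ℤ) - M (j + 1)) * P * hpow

lemma chainSum_colWeight (hu : ∀ m, 0 < m → u ^ m ≠ 1) {K : ℕ}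
    (hML : ∀ j, 1 ≤ j → M j ≤ L j) (hL : ∀ j, 1 ≤ j → L (j + 1) ≤ L j)
    (hM : ∀ j, 1 ≤ j → M (j + 1) ≤ M j) (hK : L (K + 1) = M (K + 1))
    {j : ℕ} (hj : 1 ≤ j) (hjK : j ≤ K) (e : Bool) :
    chainSum (colWeight u L M) j K e =
      (if e then 1 - u ^ (L j - M j) else u ^ (L j - M j)) *
        ∏ i ∈ Icc j K, gauss u ((L i : ℤ) - M (i + 1)) ((M i : ℤ) - M (i + 1)) := by
  induction hjK using Nat.decreasingInduction generalizing e with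
  | self =>
    have := colWeight_step hu (hML K hj) (hML (K + 1) (by omega)) (hL K hj) (hM K hj) e 1
    rw [hK, Nat.sub_self, pow_zero, sub_self] at this
    simpa [chainSum_self] using this
  | of_succ k hk ih =>
    rw [chainSum_succ _ hk, ih (by omega), ih (by omega),
      ← insert_Icc_add_one_left_eq_Icc hk.le, prod_insert (by simp)]
    exact colWeight_step hu (hML k hj) (hML (k + 1) (by omega)) (hL k hj) (hM k hj) e _

end Column

section Strips

/-- The partition whose `j`-th column has length `c j` for `j ≥ 1` (`c 0` is ignored). -/
noncomputable def ofConj (c : ℕ → ℕ) (i : ℕ) : ℕ := conj (fun j => c (j + 1)) (i + 1)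

lemma ofConj_congr {c c' : ℕ → ℕ} (h : ∀ j, 1 ≤ j → c j = c' j) : ofConj c = ofConj c' := by
  have : (fun j => c (j + 1)) = fun j => c' (j + 1) := funext fun j => h (j + 1) (by omega)
  funext i
  rw [ofConj, ofConj, this]

lemma IsPartition.ofConj_conj {f : ℕ → ℕ} (hf : IsPartition f) : ofConj (conj f) = f :=
  funext hf.conj_conj_succ

lemma IsPartition.conj_ofConj {c : ℕ → ℕ} (hc : IsPartition fun j => c (j + 1)) {j : ℕ}
    (hj : 1 ≤ j) : conj (ofConj c) j = c j := by
  obtain ⟨j, rfl⟩ := Nat.exists_eq_add_of_le' hj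
  exact hc.conj_conj_succ j

noncomputable def dropCols (f : ℕ → ℕ) (D : Finset ℕ) (j : ℕ) : ℕ :=
  conj f j - if j ∈ D then 1 else 0

/-- `dropCols f D` are the column lengths of a partition containing `g`. -/
def Admissible (f g : ℕ → ℕ) (D : Finset ℕ) : Prop :=
  ∀ j, 1 ≤ j → conj g j ≤ dropCols f D j ∧ dropCols f D (j + 1) ≤ dropCols f D j

/-- `S` stands for `D = insert 1 S`: column `1` always loses its box, as `l(β) < l(λ)`. -/
noncomputable def admissibleSets (f g : ℕ → ℕ) : Finset (Finset ℕ) :=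
  (Icc 2 (f 0)).powerset.filter fun S => Admissible f g (insert 1 S)

def strips (n : ℕ) (f g : ℕ → ℕ) : Set (ℕ → ℕ) :=
  {β | IsPartition β ∧ (∀ i, g i ≤ β i) ∧ IsHStrip f β ∧ ∀ i, n - 1 ≤ i → β i = 0}

variable {n : ℕ} {f g : ℕ → ℕ} {D : Finset ℕ}

lemma Admissible.isPartition_dropCols (hf : IsPartition f) (hD : Admissible f g D) :
    IsPartition fun j => dropCols f D (j + 1) :=
  ⟨antitone_nat_of_succ_le fun j => (hD (j + 1) (by omega)).2,
    ⟨f 0, fun j hj => by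
      have := hf.conj_eq_zero (j := j + 1) (by omega)
      simp only [dropCols]
      omega⟩⟩

lemma Admissible.isPartition (hf : IsPartition f) (hD : Admissible f g D) :
    IsPartition (ofConj (dropCols f D)) :=
  (hD.isPartition_dropCols hf).conj_succ

lemma Admissible.conj_ofConj (hf : IsPartition f) (hD : Admissible f g D) {j : ℕ}
    (hj : 1 ≤ j) : conj (ofConj (dropCols f D)) j = dropCols f D j :=
  (hD.isPartition_dropCols hf).conj_ofConj hj

lemma Admissible.le_ofConj (hf : IsPartition f) (hg : IsPartition g) (hD : Admissible f g D)
    (i : ℕ) : g i ≤ ofConj (dropCols f D) i :=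
  ((hD.isPartition hf).le_iff_conj_le hg).mpr
    (fun j hj => hD.conj_ofConj hf hj ▸ (hD j hj).1) i

lemma Admissible.isHStrip (hf : IsPartition f) (hD : Admissible f g D) :
    IsHStrip f (ofConj (dropCols f D)) := by
  refine ⟨(hf.le_iff_conj_le (hD.isPartition hf)).mpr
    fun j hj => hD.conj_ofConj hf hj ▸ Nat.sub_le _ _, fun j hj => ?_⟩
  rw [hD.conj_ofConj hf hj, dropCols]
  split <;> omega

lemma Admissible.mem_strips (hf : IsPartition f) (hfl : HasLength f n) (hg : IsPartition g)
    (hD : Admissible f g D) (h1 : 1 ∈ D) : ofConj (dropCols f D) ∈ strips n f g := by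
  refine ⟨hD.isPartition hf, hD.le_ofConj hf hg, hD.isHStrip hf, fun i hi => ?_⟩
  have hlen : conj (ofConj (dropCols f D)) 1 = n - 1 := by
    rw [hD.conj_ofConj hf le_rfl, dropCols, if_pos h1, hfl.conj_one]
  by_contra hne
  have := ((hD.isPartition hf).lt_conj_iff le_rfl i).mpr (Nat.one_le_iff_ne_zero.mpr hne)
  omega

lemma exists_mem_admissibleSets (hf : IsPartition f) (hfl : HasLength f n) (hg : IsPartition g)
    {β : ℕ → ℕ} (hβ : β ∈ strips n f g) :
    ∃ S ∈ admissibleSets f g, ofConj (dropCols f (insert 1 S)) = β := by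
  obtain ⟨hβ, hgβ, ⟨hβf, hstrip⟩, hlen⟩ := hβ
  set S := (Icc 2 (f 0)).filter fun j => conj β j < conj f j
  have hβ1 : conj β 1 ≤ n - 1 := by
    by_contra hc
    have := (hβ.lt_conj_iff le_rfl (n - 1)).mp (by omega)
    rw [hlen _ le_rfl] at this
    omega
  have hdrop (j : ℕ) (hj : 1 ≤ j) : dropCols f (insert 1 S) j = conj β j := by
    have := (hf.le_iff_conj_le hβ).mp hβf j hj
    have := hstrip j hj
    have := hf.lt_conj_iff hj 0
    have := hfl.conj_one
    rcases (show j = 1 ∨ 2 ≤ j by omega) with rfl | hj2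
    · simp only [dropCols, mem_insert_self, if_true]
      omega
    · simp only [dropCols, S, mem_insert, mem_filter, mem_Icc]
      split_ifs <;> omega
  refine ⟨S, mem_filter.mpr ⟨mem_powerset.mpr (filter_subset _ _), fun j hj => ?_⟩, ?_⟩
  · rw [hdrop j hj, hdrop (j + 1) (by omega)]
    exact ⟨(hβ.le_iff_conj_le hg).mp hgβ j hj, hβ.conj_antitone hj (by omega)⟩
  · rw [ofConj_congr hdrop, hβ.ofConj_conj]

lemma injOn_admissibleSets (hf : IsPartition f) :
    Set.InjOn (fun S => ofConj (dropCols f (insert 1 S))) ↑(admissibleSets f g) := by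
  have hmem {S T : Finset ℕ} (hS : S ⊆ Icc 2 (f 0)) (hST : ∀ j, 1 ≤ j →
      dropCols f (insert 1 S) j = dropCols f (insert 1 T) j) {j : ℕ} (hj : j ∈ S) : j ∈ T := by
    have hjK := mem_Icc.mp (hS hj)
    have := (hf.lt_conj_iff (j := j) (by omega) 0).mpr hjK.2
    have := hST j (by omega)
    simp only [dropCols, mem_insert, hj, or_true, if_true] at this
    split_ifs at this with hT
    · exact hT.resolve_left (by omega)
    · omega
  intro S hS T hT hST
  simp only [admissibleSets, coe_filter, mem_powerset, Set.mem_ofPred_eq] at hS hT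
  have hdrop (j : ℕ) (hj : 1 ≤ j) : dropCols f (insert 1 S) j = dropCols f (insert 1 T) j := by
    rw [← hS.2.conj_ofConj hf hj, ← hT.2.conj_ofConj hf hj]
    exact congrArg (conj · j) hST
  exact Finset.ext fun j => ⟨hmem hS.1 hdrop, hmem hT.1 fun j hj => (hdrop j hj).symm⟩

lemma strips_eq_image (hf : IsPartition f) (hfl : HasLength f n) (hg : IsPartition g) :
    strips n f g = (fun S => ofConj (dropCols f (insert 1 S))) '' ↑(admissibleSets f g) := by
  ext β
  constructor
  · intro hβ
    obtain ⟨S, hS, rfl⟩ := exists_mem_admissibleSets hf hfl hg hβ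
    exact ⟨S, hS, rfl⟩
  · rintro ⟨S, hS, rfl⟩
    exact (mem_filter.mp hS).2.mem_strips hf hfl hg (mem_insert_self 1 S)

end Strips

section Weights

variable {F : Type*} [Field F] (u : F) {f g : ℕ → ℕ}

noncomputable def stripWeight (f g β : ℕ → ℕ) : F :=
  phiStrip u f β * u ^ (psize β - psize g) * sk u β g

lemma sk_eq_prod_Icc {β : ℕ → ℕ} (hβ : IsPartition β) (hg : IsPartition g)
    (hgβ : ∀ i, g i ≤ β i) {K : ℕ} (hK : β 0 ≤ K) :
    sk u β g = u ^ (∑ j ∈ Icc 1 K, (conj β j - conj g j).choose 2) *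
      ∏ j ∈ Icc 1 K,
        gauss u ((conj β j : ℤ) - conj g (j + 1)) ((conj g j : ℤ) - conj g (j + 1)) := by
  have hvanish (j : ℕ) (hj : j ∈ Icc 1 K) (hjn : j ∉ Icc 1 (β 0)) :
      conj β j = 0 ∧ conj g j = 0 ∧ conj g (j + 1) = 0 := by
    have hlt : β 0 < j := by simp only [mem_Icc] at hj hjn; omega
    have := hgβ 0
    exact ⟨hβ.conj_eq_zero hlt, hg.conj_eq_zero (by omega), hg.conj_eq_zero (by omega)⟩
  rw [sk, sum_subset (Icc_subset_Icc_right hK), prod_subset (Icc_subset_Icc_right hK)]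
  · intro j hj hjn
    obtain ⟨h1, h2, h3⟩ := hvanish j hj hjn
    simp [h1, h2, h3, gauss_zero_zero]
  · intro j hj hjn
    obtain ⟨h1, h2, -⟩ := hvanish j hj hjn
    simp [h1, h2]

/-- The factor of column `j` in `stripWeight u f g (ofConj (dropCols f D))`. -/
lemma colWeight_dropCols {D : Finset ℕ} {j : ℕ} (hj : 1 ≤ conj f j)
    (hj' : j + 1 ∈ D → 1 ≤ conj f (j + 1)) (hgD : conj g j ≤ dropCols f D j) :
    (if conj f j = dropCols f D j + 1 ∧ conj f (j + 1) = dropCols f D (j + 1)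
        then 1 - u ^ (conj f j - conj f (j + 1)) else 1) *
      u ^ (dropCols f D j - conj g j) *
      (u ^ (dropCols f D j - conj g j).choose 2 *
        gauss u ((dropCols f D j : ℤ) - conj g (j + 1)) ((conj g j : ℤ) - conj g (j + 1))) =
    u ^ (conj f j - conj g j).choose 2 * colWeight u (conj f) (conj g) j (j ∈ D) (j + 1 ∈ D) := by
  by_cases hjD : j ∈ D
  · have hc : dropCols f D j = conj f j - 1 := by simp [dropCols, hjD]
    have hpow : u ^ (conj f j - 1 - conj g j) * u ^ (conj f j - 1 - conj g j).choose 2 =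
        u ^ (conj f j - conj g j).choose 2 := by
      rw [← pow_add, show conj f j - conj g j = (conj f j - 1 - conj g j) + 1 by omega,
        Nat.choose_succ_succ, Nat.choose_one_right]
    have hcast : ((conj f j - 1 : ℕ) : ℤ) - conj g (j + 1) =
        (conj f j : ℤ) - 1 - conj g (j + 1) := by
      omega
    have hcond : (conj f j = conj f j - 1 + 1 ∧ conj f (j + 1) = dropCols f D (j + 1)) ↔
        j + 1 ∉ D := by
      by_cases h : j + 1 ∈ D
      · have := hj' h
        simp only [dropCols, h, if_true, not_true_eq_false, iff_false]
        omega
      · simp only [dropCols, h, if_false, not_false_eq_true, iff_true]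
        omega
    rw [hc, if_congr hcond rfl rfl, hcast]
    set G := gauss u ((conj f j : ℤ) - 1 - conj g (j + 1)) ((conj g j : ℤ) - conj g (j + 1))
    by_cases h : j + 1 ∈ D
    · simp only [colWeight, hjD, h, decide_true, not_true_eq_false, if_false, if_true]
      linear_combination G * hpow
    · simp only [colWeight, hjD, h, decide_true, decide_false, not_false_eq_true, if_true,
        Bool.false_eq_true, if_false]
      linear_combination (1 - u ^ (conj f j - conj f (j + 1))) * G * hpow
  · have hc : dropCols f D j = conj f j := by simp [dropCols, hjD]
    simp only [hc, colWeight, hjD, decide_false]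
    rw [if_neg (by omega)]
    ring

lemma Admissible.stripWeight_eq (hf : IsPartition f) (hg : IsPartition g) {D : Finset ℕ}
    (hD : Admissible f g D) (hDK : D ⊆ Icc 1 (f 0)) :
    stripWeight u f g (ofConj (dropCols f D)) =
      u ^ (∑ j ∈ Icc 1 (f 0), (conj f j - conj g j).choose 2) *
        chainWeight (colWeight u (conj f) (conj g)) 1 (f 0) D := by
  set β := ofConj (dropCols f D)
  set c := dropCols f D
  have hβ : IsPartition β := hD.isPartition hf
  have hgβ : ∀ i, g i ≤ β i := hD.le_ofConj hf hg
  have hβf : β 0 ≤ f 0 := (hD.isHStrip hf).1 0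
  have hconj (j : ℕ) (hj : j ∈ Icc 1 (f 0)) : conj β j = c j :=
    hD.conj_ofConj hf (mem_Icc.mp hj).1
  have hphi : phiStrip u f β = ∏ j ∈ Icc 1 (f 0),
      if conj f j = c j + 1 ∧ conj f (j + 1) = c (j + 1)
        then 1 - u ^ (conj f j - conj f (j + 1)) else 1 := by
    rw [phiStrip, if_pos (hD.isHStrip hf), prod_filter]
    refine prod_congr rfl fun j hj => ?_
    rw [hconj j hj, hD.conj_ofConj hf (by have := (mem_Icc.mp hj).1; omega)]
  have hpsize : psize β - psize g = ∑ j ∈ Icc 1 (f 0), (c j - conj g j) := by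
    rw [hβ.psize_eq_sum_conj hβf, hg.psize_eq_sum_conj ((hgβ 0).trans hβf),
      sum_congr rfl hconj, sum_tsub_distrib _ fun j hj => (hD j (mem_Icc.mp hj).1).1]
  have hsk : sk u β g = u ^ (∑ j ∈ Icc 1 (f 0), (c j - conj g j).choose 2) *
      ∏ j ∈ Icc 1 (f 0),
        gauss u ((c j : ℤ) - conj g (j + 1)) ((conj g j : ℤ) - conj g (j + 1)) := by
    rw [sk_eq_prod_Icc u hβ hg hgβ hβf, sum_congr rfl fun j hj => by rw [hconj j hj],
      prod_congr rfl fun j hj => by rw [hconj j hj]]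
  rw [stripWeight, hphi, hpsize, hsk, chainWeight, ← prod_pow_eq_pow_sum, ← prod_pow_eq_pow_sum,
    ← prod_pow_eq_pow_sum, ← prod_mul_distrib, ← prod_mul_distrib, ← prod_mul_distrib,
    ← prod_mul_distrib]
  refine prod_congr rfl fun j hj =>
    colWeight_dropCols u ?_ (fun hj' => ?_) (hD j (mem_Icc.mp hj).1).1
  · exact (hf.lt_conj_iff (mem_Icc.mp hj).1 0).mpr (mem_Icc.mp hj).2
  · exact (hf.lt_conj_iff (by omega) 0).mpr (mem_Icc.mp (hDK hj')).2

lemma chainWeight_eq_zero_of_not_admissible (hf : IsPartition f) (hg : IsPartition g)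
    (hgf : ∀ i, g i ≤ f i) {D : Finset ℕ} (hD : ¬ Admissible f g D) :
    chainWeight (colWeight u (conj f) (conj g)) 1 (f 0) D = 0 := by
  simp only [Admissible, not_forall, not_and_or, not_le] at hD
  obtain ⟨j, hj, hbad⟩ := hD
  have hML := (hf.le_iff_conj_le hg).mp hgf j hj
  have hL := hf.conj_antitone (j' := j + 1) hj (by omega)
  have hdrop : dropCols f D (j + 1) ≤ conj f (j + 1) := Nat.sub_le _ _
  have hjD : j ∈ D := by
    by_contra h
    simp only [dropCols, h, if_false, Nat.sub_zero] at hbad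
    omega
  have hcj : dropCols f D j = conj f j - 1 := by simp [dropCols, hjD]
  rw [hcj] at hbad
  have hjK : j ≤ f 0 := (hf.lt_conj_iff hj 0).mp (by omega)
  refine prod_eq_zero (i := j) (mem_Icc.mpr ⟨hj, hjK⟩) ?_
  simp only [colWeight, hjD, decide_true]
  rcases hbad with hbad | hbad
  -- `μ'_j = λ'_j`: the Gaussian binomial vanishes
  · rw [gauss_of_lt u (by omega), zero_mul]
  -- `λ'_j = λ'_{j+1}` and only column `j` loses its box: the strip factor vanishes
  · have hj1 : j + 1 ∉ D := fun h => by
      have : dropCols f D (j + 1) = conj f (j + 1) - 1 := by simp [dropCols, h]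
      omega
    have : conj f j = conj f (j + 1) := by omega
    simp [hj1, this]

lemma finsum_stripWeight {n : ℕ} (hn : 0 < n) (hf : IsPartition f) (hfl : HasLength f n)
    (hg : IsPartition g) (hgf : ∀ i, g i ≤ f i) :
    ∑ᶠ β ∈ strips n f g, stripWeight u f g β =
      u ^ (∑ j ∈ Icc 1 (f 0), (conj f j - conj g j).choose 2) *
        chainSum (colWeight u (conj f) (conj g)) 1 (f 0) true := by
  have hDK (S : Finset ℕ) (hS : S ∈ admissibleSets f g) : insert 1 S ⊆ Icc 1 (f 0) :=
    insert_subset (mem_Icc.mpr ⟨le_rfl, hfl.1 0 hn⟩)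
      ((mem_powerset.mp (mem_filter.mp hS).1).trans (Icc_subset_Icc_left (by omega)))
  rw [strips_eq_image hf hfl hg, finsum_mem_image (injOn_admissibleSets hf),
    finsum_mem_coe_finset, sum_congr rfl fun S hS =>
      (mem_filter.mp hS).2.stripWeight_eq u hf hg (hDK S hS), ← mul_sum, admissibleSets,
    sum_filter_of_ne fun S _ h => not_not.mp fun hS =>
      h (chainWeight_eq_zero_of_not_admissible u hf hg hgf hS)]
  rfl

end Weights

/-- For partitions `λ` of length `n ≥ 1` and `μ ⊆ λ` of length `n-1`,
`Σ_β φ_{λ/β}(t²) t^{2(|β|-|μ|)} sk_{β/μ}(t²) = (1 - t²) sk_{λ/μ}(t²)`, the sum being over all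
partitions `β` with `μ ⊆ β`, `λ/β` a horizontal strip, and `l(β) ≤ n-1`. -/
theorem stmt1 (n : ℕ) (hn : 1 ≤ n) (f g : ℕ → ℕ)
    (hf : IsPartition f) (hfl : HasLength f n)
    (hg : IsPartition g) (hgl : HasLength g (n - 1))
    (hsub : ∀ i, g i ≤ f i) :
    (∑ᶠ (β : ℕ → ℕ)
        (_ : IsPartition β ∧ (∀ i, g i ≤ β i) ∧ IsHStrip f β ∧ (∀ i, n - 1 ≤ i → β i = 0)),
        phiStrip ((RatFunc.X : RatFunc ℚ) ^ 2) f β *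
          ((RatFunc.X : RatFunc ℚ) ^ 2) ^ (psize β - psize g) *
          sk ((RatFunc.X : RatFunc ℚ) ^ 2) β g)
      = (1 - (RatFunc.X : RatFunc ℚ) ^ 2) * sk ((RatFunc.X : RatFunc ℚ) ^ 2) f g := by
  have hu : ∀ m, 0 < m → ((RatFunc.X : RatFunc ℚ) ^ 2) ^ m ≠ 1 := fun m hm => by
    rw [← pow_mul]
    exact RatFunc.X_pow_ne_one (by omega)
  have hg0 : g 0 ≤ f 0 := hsub 0
  refine (finsum_stripWeight _ hn hf hfl hg hsub).trans ?_
  rw [chainSum_colWeight hu ((hf.le_iff_conj_le hg).mp hsub)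
      (fun j hj => hf.conj_antitone hj (by omega)) (fun j hj => hg.conj_antitone hj (by omega))
      (by rw [hf.conj_eq_zero (by omega), hg.conj_eq_zero (by omega)])
      le_rfl (hfl.1 0 hn) true,
    hfl.conj_one, hgl.conj_one, show n - (n - 1) = 1 by omega, if_pos rfl, pow_one, sk]
  ring

end EK
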